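/- Fix ρ₁, ρ₂, κ₁, κ₂ > 0 and set ρ₃ = (ρ₁+ρ₂)/2 and α = (ρ₂−ρ₁)/(ρ₂+ρ₁). For κ₃ ∈ [−√(κ₁κ₂), √(κ₁κ₂)] let κ = √(κ₁κ₂ − κ₃²) and define ω(κ₃) ∈ ℂ by: ω = ((2κ)^{1+α}/(κ₂ρ₃^α))·(Γ(−α)/Γ(1+α))·Γ(1 + (α/2)(1 + iκ₃/κ)) / Γ(−(α/2)(1 − iκ₃/κ)) if ρ₁ ≠ ρ₂ and κ > 0; ω = ((iακ₃)^{1+α}/(κ₂ρ₃^α))·Γ(−α)/Γ(1+α) if ρ₁ ≠ ρ₂ and κ = 0; ω = (κ − iκ₃)/κ₂ if ρ₁ = ρ₂. Then the function κ₃ ↦ arg ω(κ₃) is a strictly decreasing, odd bijection from [−√(κ₁κ₂), √(κ₁κ₂)] onto [−(π/2)(1−|α|), (π/2)(1−|α|)]. -/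

import Mathlib

open Real Set

noncomputable section

/-!
With `t = κ₃ / κ`, the reflection formula and `Γ (conj s) = conj (Γ s)` turn the Gamma quotient
into `-(|Γ (1 + u)|² / π) · sin (π conj u)` with `u = (α / 2) (1 + i t)`. Since
`Γ (-α) / Γ (1 + α)` has the sign of `-α`, `ω` is a positive multiple of `sin (b (1 - i t))`,
`b = π |α| / 2`, so `arg ω = -arctan (cot b · tanh (b t))`; for `α = 0` it is `-arctan t`.
This is an odd, strictly decreasing function of `t` with range `(-(π/2 - b), π/2 - b)`, and
`t = κ₃ / √(κ₁κ₂ - κ₃²)` increases from `-∞` to `∞`. At the endpoints `κ = 0`, the principal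
power `(i α κ₃)^(1 + α)` gives `arg ω = ∓ (π / 2) (1 - |α|)`.
-/

theorem StrictAntiOn.Icc_of_Ioo {f : ℝ → ℝ} {a b c d : ℝ} (hf : StrictAntiOn f (Ioo a b))
    (hmaps : MapsTo f (Ioo a b) (Ioo c d)) (ha : f a = d) (hb : f b = c) :
    StrictAntiOn f (Icc a b) := by
  intro x hx y hy hxy
  rcases hx.1.eq_or_lt with rfl | hax <;> rcases hy.2.eq_or_lt with rfl | hyb
  · obtain ⟨z, hz⟩ := exists_between hxy
    rw [ha, hb]
    exact (hmaps hz).1.trans (hmaps hz).2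
  · rw [ha]; exact (hmaps ⟨hxy, hyb⟩).2
  · rw [hb]; exact (hmaps ⟨hax, hxy⟩).1
  · exact hf ⟨hax, hxy.trans hyb⟩ ⟨hax.trans hxy, hyb⟩ hxy

theorem StrictAntiOn.bijOn_Icc_of_Ioo {f : ℝ → ℝ} {a b c d : ℝ} (hab : a < b)
    (hf : StrictAntiOn f (Ioo a b)) (hmaps : MapsTo f (Ioo a b) (Ioo c d))
    (hsurj : SurjOn f (Ioo a b) (Ioo c d)) (ha : f a = d) (hb : f b = c) :
    BijOn f (Icc a b) (Icc c d) := by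
  have hcd : c < d := by
    obtain ⟨z, hz⟩ := exists_between hab
    exact (hmaps hz).1.trans (hmaps hz).2
  refine ⟨fun x hx => ?_, (hf.Icc_of_Ioo hmaps ha hb).injOn, fun y hy => ?_⟩
  · rcases hx.1.eq_or_lt with rfl | hax
    · rw [ha]; exact right_mem_Icc.2 hcd.le
    rcases hx.2.eq_or_lt with rfl | hxb
    · rw [hb]; exact left_mem_Icc.2 hcd.le
    · exact Ioo_subset_Icc_self (hmaps ⟨hax, hxb⟩)
  · rcases hy.1.eq_or_lt with rfl | hcy
    · exact ⟨b, right_mem_Icc.2 hab.le, hb⟩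
    rcases hy.2.eq_or_lt with rfl | hyd
    · exact ⟨a, left_mem_Icc.2 hab.le, ha⟩
    · obtain ⟨x, hx, rfl⟩ := hsurj ⟨hcy, hyd⟩
      exact ⟨x, Ioo_subset_Icc_self hx, rfl⟩

namespace Real

theorem strictMono_tanh : StrictMono tanh := fun x y hxy => by
  have hmem : ∀ z, tanh z ∈ Ioo (-1 : ℝ) 1 := fun z => ⟨neg_one_lt_tanh z, tanh_lt_one z⟩
  rwa [← strictMonoOn_artanh.lt_iff_lt (hmem x) (hmem y), artanh_tanh, artanh_tanh]

theorem cot_pos_of_mem_Ioo {b : ℝ} (h0 : 0 < b) (h1 : b < π / 2) : 0 < cot b := by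
  rw [cot_eq_cos_div_sin]
  exact div_pos (cos_pos_of_mem_Ioo ⟨by linarith, h1⟩) (sin_pos_of_pos_of_lt_pi h0 (by linarith))

theorem arctan_cot {b : ℝ} (h0 : 0 < b) (h1 : b < π) : arctan (cot b) = π / 2 - b := by
  rw [cot_eq_cos_div_sin, ← inv_div, ← tan_eq_sin_div_cos, ← tan_pi_div_two_sub,
    arctan_tan (by linarith) (by linarith)]

theorem strictMono_arctan_mul_tanh {b c : ℝ} (hb : 0 < b) (hc : 0 < c) :
    StrictMono fun t => arctan (c * tanh (b * t)) :=
  arctan_strictMono.comp <| (strictMono_mul_left_of_pos hc).comp <|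
    strictMono_tanh.comp (strictMono_mul_left_of_pos hb)

theorem range_arctan_mul_tanh {b c : ℝ} (hb : b ≠ 0) (hc : 0 < c) :
    range (fun t => arctan (c * tanh (b * t))) = Ioo (-arctan c) (arctan c) := by
  ext y
  constructor
  · rintro ⟨t, rfl⟩
    have h1 := neg_one_lt_tanh (b * t)
    have h2 := tanh_lt_one (b * t)
    rw [← arctan_neg]
    exact ⟨arctan_strictMono (by nlinarith), arctan_strictMono (by nlinarith)⟩
  · rintro ⟨h1, h2⟩
    have hac := arctan_mem_Ioo c
    have hy : y ∈ Ioo (-(π / 2)) (π / 2) := ⟨by linarith [hac.2], by linarith [hac.2]⟩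
    have htan : tan y / c ∈ Ioo (-1) 1 := by
      have hlt := strictMonoOn_tan hy hac h2
      have hgt := strictMonoOn_tan ⟨by linarith [hac.2], by linarith [hac.1]⟩ hy h1
      rw [tan_arctan] at hlt
      rw [tan_neg, tan_arctan] at hgt
      rw [mem_Ioo, lt_div_iff₀ hc, div_lt_one hc]
      constructor <;> linarith
    obtain ⟨s, -, hs⟩ := tanh_surjOn htan
    refine ⟨s / b, ?_⟩
    dsimp only
    rw [mul_div_cancel₀ _ hb, hs, mul_div_cancel₀ _ hc.ne', arctan_tan hy.1 hy.2]

theorem range_arctan_cot_mul_tanh {b : ℝ} (h0 : 0 < b) (h1 : b < π / 2) :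
    range (fun t => arctan (cot b * tanh (b * t))) = Ioo (-(π / 2 - b)) (π / 2 - b) := by
  rw [range_arctan_mul_tanh h0.ne' (cot_pos_of_mem_Ioo h0 h1), arctan_cot h0 (by linarith)]

theorem mul_Gamma_neg_div_Gamma_one_add_neg {α : ℝ} (h0 : α ≠ 0) (h1 : |α| < 1) :
    α * (Gamma (-α) / Gamma (1 + α)) < 0 := by
  obtain ⟨h1, h2⟩ := abs_lt.1 h1
  have h : α * Gamma (-α) = -Gamma (1 - α) := by
    rw [sub_eq_neg_add, Gamma_add_one (neg_ne_zero.2 h0)]; ring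
  rw [← mul_div_assoc, h, neg_div]
  exact neg_neg_of_pos (div_pos (Gamma_pos_of_pos (by linarith)) (Gamma_pos_of_pos (by linarith)))

end Real

theorem div_sqrt_sq_sub_sq_eq_tan_arcsin {m x : ℝ} (hm : 0 < m) :
    x / √(m ^ 2 - x ^ 2) = tan (arcsin (x / m)) := by
  rw [tan_arcsin, div_pow, one_sub_div (by positivity), sqrt_div' _ (sq_nonneg m), sqrt_sq hm.le,
    div_div_div_cancel_right₀ hm.ne']

theorem strictMonoOn_div_sqrt_sq_sub_sq {m : ℝ} (hm : 0 < m) :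
    StrictMonoOn (fun x => x / √(m ^ 2 - x ^ 2)) (Ioo (-m) m) := by
  have hdiv : MapsTo (fun x => x / m) (Ioo (-m) m) (Ioo (-1) 1) := fun x hx => by
    rw [mem_Ioo, lt_div_iff₀ hm, div_lt_one hm]; exact ⟨by linarith [hx.1], hx.2⟩
  have harcsin : MapsTo arcsin (Ioo (-1) 1) (Ioo (-(π / 2)) (π / 2)) := fun y hy =>
    ⟨neg_pi_div_two_lt_arcsin.2 hy.1, arcsin_lt_pi_div_two.2 hy.2⟩
  simp_rw [div_sqrt_sq_sub_sq_eq_tan_arcsin hm]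
  exact strictMonoOn_tan.comp ((strictMonoOn_arcsin.mono Ioo_subset_Icc_self).comp
    (fun x _ y _ h => div_lt_div_of_pos_right h hm) hdiv) (harcsin.comp hdiv)

theorem surjOn_div_sqrt_sq_sub_sq {m : ℝ} (hm : 0 < m) :
    SurjOn (fun x => x / √(m ^ 2 - x ^ 2)) (Ioo (-m) m) univ := by
  intro t _
  have hθ := arctan_mem_Ioo t
  refine ⟨m * sin (arctan t), ?_, ?_⟩
  · have hsin : |sin (arctan t)| < 1 := by
      rw [← sq_lt_one_iff_abs_lt_one]
      nlinarith [sin_sq_add_cos_sq (arctan t), cos_arctan_pos t]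
    obtain ⟨h1, h2⟩ := abs_lt.1 hsin
    constructor <;> nlinarith
  · dsimp only
    rw [div_sqrt_sq_sub_sq_eq_tan_arcsin hm, mul_div_cancel_left₀ _ hm.ne',
      arcsin_sin hθ.1.le hθ.2.le, tan_arctan]

theorem strictAntiOn_bijOn_of_eq_neg_comp_div_sqrt {m B : ℝ} (hm : 0 < m) {G : ℝ → ℝ}
    (hG : StrictMono G) (hG_odd : ∀ t, G (-t) = -G t) (hG_range : range G = Ioo (-B) B)
    {f : ℝ → ℝ} (hf : ∀ x ∈ Ioo (-m) m, f x = -G (x / √(m ^ 2 - x ^ 2)))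
    (hf_left : f (-m) = B) (hf_right : f m = -B) :
    StrictAntiOn f (Icc (-m) m) ∧ (∀ x ∈ Icc (-m) m, f (-x) = -f x) ∧
      BijOn f (Icc (-m) m) (Icc (-B) B) := by
  have hanti : StrictAntiOn f (Ioo (-m) m) := fun x hx y hy hxy => by
    rw [hf x hx, hf y hy]
    exact neg_lt_neg (hG (strictMonoOn_div_sqrt_sq_sub_sq hm hx hy hxy))
  have hmaps : MapsTo f (Ioo (-m) m) (Ioo (-B) B) := fun x hx => by
    obtain ⟨h1, h2⟩ : G _ ∈ Ioo (-B) B := hG_range ▸ mem_range_self (x / √(m ^ 2 - x ^ 2))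
    rw [hf x hx]; constructor <;> linarith
  have hsurj : SurjOn f (Ioo (-m) m) (Ioo (-B) B) := fun y hy => by
    obtain ⟨t, ht⟩ : -y ∈ range G := hG_range ▸ ⟨by linarith [hy.2], by linarith [hy.1]⟩
    obtain ⟨x, hx, rfl⟩ := surjOn_div_sqrt_sq_sub_sq hm (mem_univ t)
    exact ⟨x, hx, by rw [hf x hx, ht, neg_neg]⟩
  refine ⟨hanti.Icc_of_Ioo hmaps hf_left hf_right, fun x hx => ?_,
    hanti.bijOn_Icc_of_Ioo (by linarith) hmaps hsurj hf_left hf_right⟩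
  rcases hx.1.eq_or_lt with rfl | h1
  · rw [neg_neg, hf_left, hf_right]
  rcases hx.2.eq_or_lt with rfl | h2
  · rw [hf_left, hf_right, neg_neg]
  · rw [hf x ⟨h1, h2⟩, hf (-x) ⟨neg_lt_neg h2, by linarith⟩, neg_sq, neg_div, hG_odd]

open ComplexConjugate
open Complex (I)

namespace Complex

theorem arg_eq_arctan_of_re_pos {z : ℂ} (hz : 0 < z.re) : z.arg = Real.arctan (z.im / z.re) := by
  obtain ⟨h1, h2⟩ := abs_lt.1 (abs_arg_lt_pi_div_two_iff.2 (Or.inl hz))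
  rw [← tan_arg, Real.arctan_tan h1 h2]

theorem arg_sin_of_re_mem_Ioo {z : ℂ} (hz : z.re ∈ Ioo 0 π) :
    (sin z).arg = Real.arctan (Real.cot z.re * Real.tanh z.im) := by
  have hre : (sin z).re = Real.sin z.re * Real.cosh z.im := by
    rw [sin_eq]; simp [← ofReal_sin, ← ofReal_cos, ← ofReal_sinh, ← ofReal_cosh]
  have him : (sin z).im = Real.cos z.re * Real.sinh z.im := by
    rw [sin_eq]; simp [← ofReal_sin, ← ofReal_cos, ← ofReal_sinh, ← ofReal_cosh]
  have hsin : 0 < Real.sin z.re := Real.sin_pos_of_pos_of_lt_pi hz.1 hz.2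
  rw [arg_eq_arctan_of_re_pos (by rw [hre]; exact mul_pos hsin (Real.cosh_pos _)), hre, him,
    Real.cot_eq_cos_div_sin, Real.tanh_eq_sinh_div_cosh, div_mul_div_comm]

theorem ofReal_mul_sin_eq_abs {r a : ℝ} (h : 0 ≤ a * r) (z : ℂ) :
    (r : ℂ) * sin (a * z) = |r| * sin (|a| * z) := by
  rcases lt_trichotomy r 0 with hr | rfl | hr
  · rw [abs_of_neg hr, abs_of_nonpos (nonpos_of_mul_nonneg_left h hr)]
    push_cast
    simp only [neg_mul, sin_neg]
    ring
  · simp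
  · rw [abs_of_pos hr, abs_of_nonneg (nonneg_of_mul_nonneg_left h hr)]

theorem inv_Gamma_neg {v : ℂ} (hv : Gamma (1 + v) ≠ 0) :
    (Gamma (-v))⁻¹ = -(Gamma (1 + v) * sin (π * v) / π) := by
  have h := Gamma_mul_Gamma_one_sub (-v)
  rw [sub_neg_eq_add, mul_neg, sin_neg] at h
  rcases eq_or_ne (sin (π * v)) 0 with hs | hs
  -- Then `-v` is a pole, where Mathlib's `Gamma` takes the junk value `0`: both sides vanish.
  · rw [hs, neg_zero, div_zero, mul_eq_zero] at h
    rw [h.resolve_right hv, hs]; simp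
  · have hπ : (π : ℂ) ≠ 0 := ofReal_ne_zero.2 pi_ne_zero
    rw [eq_div_iff (neg_ne_zero.2 hs)] at h
    have hΓ : Gamma (-v) ≠ 0 := by
      rintro h0; rw [h0, zero_mul, zero_mul] at h; exact hπ h.symm
    -- keeps `field_simp` from reordering the argument of `sin`, which `linear_combination` needs
    set s := sin (π * v)
    field_simp
    linear_combination -h

theorem Gamma_one_add_div_Gamma_neg_conj {u : ℂ} (hu : Gamma (1 + u) ≠ 0) :
    Gamma (1 + u) / Gamma (-conj u) =
      -((normSq (Gamma (1 + u)) / π : ℝ) : ℂ) * sin (π * conj u) := by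
  have hconj : Gamma (1 + conj u) = conj (Gamma (1 + u)) := by
    rw [← Gamma_conj, map_add, map_one]
  rw [div_eq_mul_inv, inv_Gamma_neg (by rwa [hconj, map_ne_zero]), hconj]
  push_cast
  rw [← mul_conj]
  ring

theorem Gamma_neg_div_Gamma_one_add_ofReal (α : ℝ) :
    Gamma (-α) / Gamma (1 + α) = ((Real.Gamma (-α) / Real.Gamma (1 + α) : ℝ) : ℂ) := by
  rw [← ofReal_neg, ← ofReal_one, ← ofReal_add, Gamma_ofReal, Gamma_ofReal, ofReal_div]

theorem arg_I_mul_mul_of_pos {a y : ℝ} (hy : 0 < y) : (I * a * y).arg * a = |a| * (π / 2) := by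
  rcases lt_trichotomy a 0 with ha | rfl | ha
  · rw [show I * a * y = ((-(a * y) : ℝ) : ℂ) * -I by push_cast; ring,
      arg_real_mul _ (by nlinarith), arg_neg_I, abs_of_neg ha]
    ring
  · simp
  · rw [show I * a * y = ((a * y : ℝ) : ℂ) * I by push_cast; ring,
      arg_real_mul _ (by positivity), arg_I, abs_of_pos ha]
    ring

theorem arg_cpow_ofReal {w : ℂ} (hw : w ≠ 0) {s : ℝ} (h : w.arg * s ∈ Ioc (-π) π) :
    (w ^ (s : ℂ)).arg = w.arg * s := by
  rw [cpow_ofReal, ofReal_cos, ofReal_sin,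
    arg_mul_cos_add_sin_mul_I (rpow_pos_of_pos (norm_pos_iff.2 hw) _) h]

end Complex

theorem arg_ofReal_mul_Gamma_ratio {α C t : ℝ} (hα0 : α ≠ 0) (hα1 : |α| < 1) (hC : 0 < C) :
    (C * (Complex.Gamma (-α) / Complex.Gamma (1 + α)) *
        (Complex.Gamma (1 + α / 2 * (1 + I * t)) / Complex.Gamma (-(α / 2) * (1 - I * t)))).arg =
      -arctan (cot (π * |α| / 2) * tanh (π * |α| / 2 * t)) := by
  obtain ⟨h1, h2⟩ := abs_lt.1 hα1
  set u : ℂ := α / 2 * (1 + I * t) with hu_def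
  have hconj : conj u = α / 2 * (1 - I * t) := by
    simp only [hu_def, map_mul, map_div₀, map_add, map_one, map_ofNat, Complex.conj_ofReal,
      Complex.conj_I]
    ring
  have hu : Complex.Gamma (1 + u) ≠ 0 :=
    Complex.Gamma_ne_zero_of_re_pos (by simp [hu_def]; linarith)
  have hN : 0 < Complex.normSq (Complex.Gamma (1 + u)) := Complex.normSq_pos.2 hu
  have hαg := mul_Gamma_neg_div_Gamma_one_add_neg hα0 hα1
  set N := Complex.normSq (Complex.Gamma (1 + u))
  set g := Gamma (-α) / Gamma (1 + α)
  rw [neg_mul, ← hconj, Complex.Gamma_one_add_div_Gamma_neg_conj hu,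
    Complex.Gamma_neg_div_Gamma_one_add_ofReal, hconj,
    show (C : ℂ) * g * (-((N / π : ℝ) : ℂ) * Complex.sin (π * (α / 2 * (1 - I * t)))) =
      ((C * g * -(N / π) : ℝ) : ℂ) * Complex.sin ((α / 2 : ℝ) * (π * (1 - I * t))) by
        push_cast; ring_nf]
  have hr : 0 < α / 2 * (C * g * -(N / π)) := by
    rw [show α / 2 * (C * g * -(N / π)) = C * (N / π) / 2 * -(α * g) by ring]
    exact mul_pos (by positivity) (neg_pos.2 hαg)
  set z : ℂ := ((|α / 2| : ℝ) : ℂ) * (π * (1 - I * t))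
  have hre : z.re = π * |α| / 2 := by simp [z, abs_div]; ring
  have him : z.im = -(π * |α| / 2 * t) := by simp [z, abs_div]; ring
  have hre_mem : z.re ∈ Ioo 0 π := by
    rw [hre]
    constructor <;> nlinarith [mul_pos pi_pos (abs_pos.2 hα0), mul_lt_mul_of_pos_left hα1 pi_pos]
  rw [Complex.ofReal_mul_sin_eq_abs hr.le,
    Complex.arg_real_mul _ (abs_pos.2 (right_ne_zero_of_mul hr.ne')),
    Complex.arg_sin_of_re_mem_Ioo hre_mem, hre, him, tanh_neg, mul_neg, arctan_neg]

theorem arg_I_mul_cpow_one_add_div_mul_Gamma_ratio_eq {α D y : ℝ} (hα0 : α ≠ 0)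
    (hα1 : |α| < 1) (hD : 0 < D) (hy : y ≠ 0) :
    ((I * α * y) ^ (1 + (α : ℂ)) / D * (Complex.Gamma (-α) / Complex.Gamma (1 + α))).arg =
      (-I * y * (I * α * y) ^ (α : ℂ)).arg := by
  have hw : I * α * y ≠ 0 := by simp [hα0, hy]
  have hpos : 0 < -(α * (Gamma (-α) / Gamma (1 + α))) / D :=
    div_pos (neg_pos.2 (mul_Gamma_neg_div_Gamma_one_add_neg hα0 hα1)) hD
  rw [Complex.cpow_add _ _ hw, Complex.cpow_one, Complex.Gamma_neg_div_Gamma_one_add_ofReal,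
    ← Complex.arg_real_mul (-I * y * _) hpos]
  congr 1
  push_cast
  ring

theorem arg_I_mul_cpow_one_add_div_mul_Gamma_ratio {α D x : ℝ} (hα0 : α ≠ 0) (hα1 : |α| < 1)
    (hD : 0 < D) (hx : 0 < x) :
    ((I * α * x) ^ (1 + (α : ℂ)) / D * (Complex.Gamma (-α) / Complex.Gamma (1 + α))).arg =
        -(π / 2 - π * |α| / 2) ∧
      ((I * α * (-x : ℝ)) ^ (1 + (α : ℂ)) / D * (Complex.Gamma (-α) / Complex.Gamma (1 + α))).arg =
        π / 2 - π * |α| / 2 := by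
  obtain ⟨h1, h2⟩ := abs_lt.1 hα1
  have hpi := pi_pos
  have habs := abs_nonneg α
  have hφ : (I * α * x).arg * α = |α| * (π / 2) := Complex.arg_I_mul_mul_of_pos hx
  have hφ' : (I * α * (-x : ℝ)).arg * α = -(|α| * (π / 2)) := by
    rw [← abs_neg α, ← Complex.arg_I_mul_mul_of_pos hx]; push_cast; ring_nf
  have harg : ((I * α * x) ^ (α : ℂ)).arg = |α| * (π / 2) := by
    rw [Complex.arg_cpow_ofReal (by simp [hα0, hx.ne']) (by rw [hφ]; constructor <;> nlinarith),
      hφ]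
  have harg' : ((I * α * (-x : ℝ)) ^ (α : ℂ)).arg = -(|α| * (π / 2)) := by
    rw [Complex.arg_cpow_ofReal (by simp [hα0, hx.ne']) (by rw [hφ']; constructor <;> nlinarith),
      hφ']
  have hI : (-I * x).arg = -(π / 2) := by
    rw [show -I * x = x * -I by ring, Complex.arg_real_mul _ hx, Complex.arg_neg_I]
  have hI' : (-I * (-x : ℝ)).arg = π / 2 := by
    rw [show -I * (-x : ℝ) = x * I by push_cast; ring, Complex.arg_real_mul _ hx, Complex.arg_I]
  rw [arg_I_mul_cpow_one_add_div_mul_Gamma_ratio_eq hα0 hα1 hD hx.ne',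
    arg_I_mul_cpow_one_add_div_mul_Gamma_ratio_eq hα0 hα1 hD (neg_ne_zero.2 hx.ne')]
  constructor
  · rw [Complex.arg_mul (by simp [hx.ne']) (by simp [hα0, hx.ne'])
      (by rw [hI, harg]; constructor <;> nlinarith), hI, harg]
    ring
  · rw [Complex.arg_mul (by simp [hx.ne']) (by simp [hα0, hx.ne'])
      (by rw [hI', harg']; constructor <;> nlinarith), hI', harg']
    ring

theorem arg_ofReal_sub_I_mul_div {κ x k : ℝ} (hκ : 0 < κ) (hk : 0 < k) :
    ((κ - I * x) / k : ℂ).arg = -arctan (x / κ) := by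
  rw [div_eq_inv_mul, ← Complex.ofReal_inv, Complex.arg_real_mul _ (inv_pos.2 hk),
    Complex.arg_eq_arctan_of_re_pos (by simpa using hκ)]
  simp [neg_div, arctan_neg]

theorem arg_zero_sub_I_mul_div {x k : ℝ} (hx : 0 < x) (hk : 0 < k) :
    (((0 : ℝ) - I * x) / k : ℂ).arg = -(π / 2) ∧
      (((0 : ℝ) - I * (-x : ℝ)) / k : ℂ).arg = π / 2 := by
  constructor
  · rw [show ((0 : ℝ) - I * x) / k = ((x / k : ℝ) : ℂ) * -I by push_cast; ring,
      Complex.arg_real_mul _ (div_pos hx hk), Complex.arg_neg_I]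
  · rw [show ((0 : ℝ) - I * (-x : ℝ)) / k = ((x / k : ℝ) : ℂ) * I by push_cast; ring,
      Complex.arg_real_mul _ (div_pos hx hk), Complex.arg_I]

theorem stmt15 (ρ₁ ρ₂ κ₁ κ₂ : ℝ)
    (hρ₁ : 0 < ρ₁) (hρ₂ : 0 < ρ₂) (hκ₁ : 0 < κ₁) (hκ₂ : 0 < κ₂)
    (ρ₃ α : ℝ)
    (hρ₃ : ρ₃ = (ρ₁ + ρ₂) / 2)
    (hα : α = (ρ₂ - ρ₁) / (ρ₂ + ρ₁))
    (ω : ℝ → ℂ)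
    (hω₁ : ∀ κ₃ ∈ Icc (-Real.sqrt (κ₁ * κ₂)) (Real.sqrt (κ₁ * κ₂)),
      ρ₁ ≠ ρ₂ → 0 < Real.sqrt (κ₁ * κ₂ - κ₃ ^ 2) → ω κ₃ =
        ((((2 * Real.sqrt (κ₁ * κ₂ - κ₃ ^ 2)) ^ (1 + α) : ℝ) /
            (κ₂ * (ρ₃ ^ α : ℝ)) : ℝ) : ℂ) *
          (Complex.Gamma (-(α : ℂ)) / Complex.Gamma (1 + (α : ℂ))) *
          (Complex.Gamma (1 + ((α : ℂ) / 2) *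
              (1 + Complex.I * (κ₃ : ℂ) / (Real.sqrt (κ₁ * κ₂ - κ₃ ^ 2) : ℂ))) /
            Complex.Gamma (-((α : ℂ) / 2) *
              (1 - Complex.I * (κ₃ : ℂ) / (Real.sqrt (κ₁ * κ₂ - κ₃ ^ 2) : ℂ)))))
    (hω₂ : ∀ κ₃ ∈ Icc (-Real.sqrt (κ₁ * κ₂)) (Real.sqrt (κ₁ * κ₂)),
      ρ₁ ≠ ρ₂ → Real.sqrt (κ₁ * κ₂ - κ₃ ^ 2) = 0 → ω κ₃ =
        (Complex.I * (α : ℂ) * (κ₃ : ℂ)) ^ ((1 : ℂ) + (α : ℂ)) /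
          ((κ₂ : ℂ) * ((ρ₃ ^ α : ℝ) : ℂ)) *
          (Complex.Gamma (-(α : ℂ)) / Complex.Gamma (1 + (α : ℂ))))
    (hω₃ : ∀ κ₃ ∈ Icc (-Real.sqrt (κ₁ * κ₂)) (Real.sqrt (κ₁ * κ₂)),
      ρ₁ = ρ₂ → ω κ₃ =
        ((Real.sqrt (κ₁ * κ₂ - κ₃ ^ 2) : ℂ) - Complex.I * (κ₃ : ℂ)) / (κ₂ : ℂ)) :
    StrictAntiOn (fun κ₃ => Complex.arg (ω κ₃))
        (Icc (-Real.sqrt (κ₁ * κ₂)) (Real.sqrt (κ₁ * κ₂))) ∧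
    (∀ κ₃ ∈ Icc (-Real.sqrt (κ₁ * κ₂)) (Real.sqrt (κ₁ * κ₂)),
        Complex.arg (ω (-κ₃)) = -Complex.arg (ω κ₃)) ∧
    BijOn (fun κ₃ => Complex.arg (ω κ₃))
        (Icc (-Real.sqrt (κ₁ * κ₂)) (Real.sqrt (κ₁ * κ₂)))
        (Icc (-(π / 2) * (1 - |α|)) ((π / 2) * (1 - |α|))) := by
  have hα1 : |α| < 1 := by
    rw [hα, abs_div, abs_of_pos (by linarith : 0 < ρ₂ + ρ₁), div_lt_one (by linarith), abs_lt]
    constructor <;> linarith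
  have hκ₁₂ : 0 < κ₁ * κ₂ := mul_pos hκ₁ hκ₂
  have hsq : κ₁ * κ₂ = √(κ₁ * κ₂) ^ 2 := (sq_sqrt hκ₁₂.le).symm
  have hm : 0 < √(κ₁ * κ₂) := sqrt_pos.2 hκ₁₂
  generalize √(κ₁ * κ₂) = m at *
  rw [hsq] at hω₁ hω₂ hω₃
  have hκ : ∀ x ∈ Ioo (-m) m, 0 < √(m ^ 2 - x ^ 2) := fun x hx =>
    sqrt_pos.2 (by nlinarith [hx.1, hx.2])
  have hκ_end : √(m ^ 2 - m ^ 2) = 0 ∧ √(m ^ 2 - (-m) ^ 2) = 0 := by simp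
  have hmem : m ∈ Icc (-m) m ∧ -m ∈ Icc (-m) m := ⟨⟨by linarith, le_rfl⟩, ⟨le_rfl, by linarith⟩⟩
  rw [neg_mul, show π / 2 * (1 - |α|) = π / 2 - π * |α| / 2 by ring]
  rcases eq_or_ne ρ₁ ρ₂ with hρ | hρ
  · rw [hα, hρ, sub_self, zero_div, abs_zero, mul_zero, zero_div, sub_zero]
    obtain ⟨hr, hl⟩ := arg_zero_sub_I_mul_div hm hκ₂
    refine strictAntiOn_bijOn_of_eq_neg_comp_div_sqrt hm arctan_strictMono arctan_neg range_arctan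
      (fun x hx => ?_) ?_ ?_
    · rw [hω₃ x (Ioo_subset_Icc_self hx) hρ]; exact arg_ofReal_sub_I_mul_div (hκ x hx) hκ₂
    · rw [hω₃ _ hmem.2 hρ, hκ_end.2]; exact hl
    · rw [hω₃ _ hmem.1 hρ, hκ_end.1]; exact hr
  · have hα0 : α ≠ 0 := by rw [hα]; exact div_ne_zero (sub_ne_zero.2 hρ.symm) (by linarith)
    have hb : 0 < π * |α| / 2 := by positivity
    have hb' : π * |α| / 2 < π / 2 := by nlinarith [pi_pos]
    have hρ₃' : 0 < ρ₃ := by rw [hρ₃]; positivity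
    obtain ⟨hr, hl⟩ := arg_I_mul_cpow_one_add_div_mul_Gamma_ratio hα0 hα1
      (by positivity : 0 < κ₂ * ρ₃ ^ α) hm
    refine strictAntiOn_bijOn_of_eq_neg_comp_div_sqrt hm
      (strictMono_arctan_mul_tanh hb (cot_pos_of_mem_Ioo hb hb'))
      (fun t => by rw [mul_neg, tanh_neg, mul_neg, arctan_neg])
      (range_arctan_cot_mul_tanh hb hb') (fun x hx => ?_) ?_ ?_
    · rw [hω₁ x (Ioo_subset_Icc_self hx) hρ (hκ x hx), mul_div_assoc, ← Complex.ofReal_div]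
      exact arg_ofReal_mul_Gamma_ratio hα0 hα1
        (div_pos (rpow_pos_of_pos (by linarith [hκ x hx]) _) (by positivity))
    · rw [hω₂ _ hmem.2 hρ hκ_end.2, ← Complex.ofReal_mul]; exact hl
    · rw [hω₂ _ hmem.1 hρ hκ_end.1, ← Complex.ofReal_mul]; exact hr
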